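/- Let X ∈ ℝ^{m×n} have rank s < k ≤ min(m,n), and let F ∈ ℝ^{m×n}. If G is a best approximation (in Frobenius norm) of F in the tangent cone T_X M_{≤k}, then ‖G‖_F ≥ sqrt((k−s)/min(m−s, n−s)) · ‖F‖_F. -/

import Mathlib

/-!
Let `P`, `Q` be the orthogonal projectors onto the column and row spaces of `X`. Then
`F = C * X + X * D + A` with `A = (1 - P) * F * (1 - Q)`, a matrix of rank at most
`p = min (m - s) (n - s)` and with `‖A‖ ≤ ‖F‖`. Deflating `A` greedily along top eigenvectors of
`Aᵀ * A`, each step lowers the rank and removes at least a `1 / p`-th of the remaining energy, so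
some `B` of rank `k - s` has `‖A - B‖² ≤ (1 - (k - s) / p) ‖A‖²`. The matrix `C * X + X * D + B` is
the velocity at `t = 0` of `(1 + t C) X (1 + t D) + t B`, a curve of rank at most `k`, hence lies in
the tangent cone and `‖F - G‖ ≤ ‖A - B‖`. As the cone is stable under positive scaling, optimality
of `G` along the ray through `G` gives `‖F‖² ≤ ‖F - G‖² + ‖G‖²`, and the bound follows.
-/

open Matrix
/-- Column space of a matrix. -/
def colSpace {m n : ℕ} (X : Matrix (Fin m) (Fin n) ℝ) : Set (Fin m → ℝ) :=
  {y | ∃ v, X.mulVec v = y}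

/-- Row space of a matrix. -/
def rowSpace {m n : ℕ} (X : Matrix (Fin m) (Fin n) ℝ) : Set (Fin n → ℝ) :=
  colSpace Xᵀ

/-- Orthogonal complement (w.r.t. the Euclidean dot product) of a set of vectors. -/
def perp {p : ℕ} (S : Set (Fin p → ℝ)) : Set (Fin p → ℝ) :=
  {x | ∀ u ∈ S, ∑ i, x i * u i = 0}

/-- `A ⊗ B`: matrices whose column space lies in `A` and row space lies in `B`. -/
def tensorSp {m n : ℕ} (A : Set (Fin m → ℝ)) (B : Set (Fin n → ℝ)) :
    Set (Matrix (Fin m) (Fin n) ℝ) :=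
  {Z | (∀ v, Z.mulVec v ∈ A) ∧ (∀ u, Zᵀ.mulVec u ∈ B)}

/-- Frobenius inner product. -/
noncomputable def frobInner {m n : ℕ} (A B : Matrix (Fin m) (Fin n) ℝ) : ℝ :=
  ∑ i, ∑ j, A i j * B i j

/-- Frobenius norm. -/
noncomputable def frobNorm {m n : ℕ} (A : Matrix (Fin m) (Fin n) ℝ) : ℝ :=
  Real.sqrt (frobInner A A)

/-- The tangent space `T_X M_s = (U⊗V) ⊕ (U^⊥⊗V) ⊕ (U⊗V^⊥)`, `U, V` column/row space of `X`. -/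
def tangentMs {m n : ℕ} (X : Matrix (Fin m) (Fin n) ℝ) : Set (Matrix (Fin m) (Fin n) ℝ) :=
  {Ξ | ∃ Z₁ ∈ tensorSp (colSpace X) (rowSpace X),
       ∃ Z₂ ∈ tensorSp (perp (colSpace X)) (rowSpace X),
       ∃ Z₃ ∈ tensorSp (colSpace X) (perp (rowSpace X)), Ξ = Z₁ + Z₂ + Z₃}

/-- Sequential tangent cone of a set of matrices, w.r.t. Frobenius distance. -/
def matTangentCone {m n : ℕ} (M : Set (Matrix (Fin m) (Fin n) ℝ))
    (X : Matrix (Fin m) (Fin n) ℝ) : Set (Matrix (Fin m) (Fin n) ℝ) :=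
  {Ξ | ∃ (Y : ℕ → Matrix (Fin m) (Fin n) ℝ) (a : ℕ → ℝ),
      (∀ i, Y i ∈ M) ∧ (∀ i, 0 < a i) ∧
      Filter.Tendsto (fun i => frobNorm (Y i - X)) Filter.atTop (nhds 0) ∧
      Filter.Tendsto (fun i => frobNorm (a i • (Y i - X) - Ξ)) Filter.atTop (nhds 0)}

/-- `P` is the orthogonal projector (symmetric idempotent matrix) onto `U`. -/
def IsOrthProjOnto {p : ℕ} (P : Matrix (Fin p) (Fin p) ℝ) (U : Set (Fin p → ℝ)) : Prop :=
  Pᵀ = P ∧ P * P = P ∧ colSpace P = U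

lemma Matrix.rank_add_le {m n K : Type*} [Fintype m] [Fintype n] [Field K] (A B : Matrix m n K) :
    (A + B).rank ≤ A.rank + B.rank := by
  have hrange : LinearMap.range (A + B).mulVecLin
      ≤ LinearMap.range A.mulVecLin ⊔ LinearMap.range B.mulVecLin := by
    rintro _ ⟨v, rfl⟩
    rw [mulVecLin_apply, add_mulVec]
    exact Submodule.add_mem_sup (LinearMap.mem_range_self _ v) (LinearMap.mem_range_self _ v)
  exact (Submodule.finrank_mono hrange).trans (Submodule.finrank_add_le_finrank_add_finrank _ _)

section Projection

lemma Matrix.transpose_eq_self_of_isStarProjection {m : Type*} [Fintype m]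
    {P : Matrix m m ℝ} (hP : IsStarProjection P) : Pᵀ = P := by
  rw [← conjTranspose_eq_transpose_of_trivial]
  exact hP.isSelfAdjoint

lemma Matrix.exists_eq_mul_of_range_le {l m n K : Type*} [Fintype l] [DecidableEq l] [Fintype n]
    [Field K] {A : Matrix m n K}
    {B : Matrix m l K} (h : LinearMap.range B.mulVecLin ≤ LinearMap.range A.mulVecLin) :
    ∃ T : Matrix n l K, B = A * T := by
  choose c hc using fun j : l => h ⟨Pi.single j 1, rfl⟩
  refine ⟨(Matrix.of c)ᵀ, ext_of_mulVec_single fun j => ?_⟩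
  have hcol : (Matrix.of c)ᵀ *ᵥ Pi.single j 1 = c j := by rw [mulVec_single_one]; rfl
  rw [← mulVec_mulVec, hcol]
  exact (hc j).symm

variable {m n : Type*} [Fintype m] [Fintype n] [DecidableEq m] [DecidableEq n]

lemma Matrix.exists_isStarProjection_mul_eq_self (X : Matrix m n ℝ) :
    ∃ P : Matrix m m ℝ, IsStarProjection P ∧ P * X = X ∧ ∃ T : Matrix n m ℝ, P = X * T := by
  set K := LinearMap.range (toEuclideanLin X)
  set P := (toEuclideanCLM (n := m) (𝕜 := ℝ)).symm K.starProjection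
  have hP : ∀ x, P *ᵥ x = K.starProjection (WithLp.toLp 2 x) := fun x => by
    rw [← ofLp_toEuclideanCLM, StarAlgEquiv.apply_symm_apply]
  refine ⟨P, isStarProjection_starProjection.map
    (StarAlgEquiv.toStarAlgHom (toEuclideanCLM (n := m) (𝕜 := ℝ)).symm),
    mulVec_injective ?_, ?_⟩
  · ext1 v
    have hv : WithLp.toLp 2 (X *ᵥ v) ∈ K := ⟨WithLp.toLp 2 v, rfl⟩
    rw [← mulVec_mulVec, hP, Submodule.starProjection_eq_self_iff.mpr hv]
  · refine exists_eq_mul_of_range_le ?_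
    rintro _ ⟨x, rfl⟩
    obtain ⟨v, hv⟩ := K.starProjection_apply_mem (WithLp.toLp 2 x)
    exact ⟨v, by simp only [mulVecLin_apply]; rw [hP, ← hv]; rfl⟩

end Projection

section Frobenius

variable {m n : ℕ}

lemma frobInner_self_nonneg (A : Matrix (Fin m) (Fin n) ℝ) : 0 ≤ frobInner A A :=
  Finset.sum_nonneg fun _ _ => Finset.sum_nonneg fun _ _ => mul_self_nonneg _

lemma frobNorm_le_frobNorm_iff {A B : Matrix (Fin m) (Fin n) ℝ} :
    frobNorm A ≤ frobNorm B ↔ frobInner A A ≤ frobInner B B :=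
  Real.sqrt_le_sqrt_iff (frobInner_self_nonneg B)

lemma frobInner_eq_trace (A B : Matrix (Fin m) (Fin n) ℝ) :
    frobInner A B = (Aᵀ * B).trace := by
  simp only [frobInner, trace, diag, mul_apply, transpose_apply]
  exact Finset.sum_comm

lemma frobInner_transpose (A B : Matrix (Fin m) (Fin n) ℝ) :
    frobInner Aᵀ Bᵀ = frobInner A B :=
  Finset.sum_comm

lemma frobInner_add_smul_self (A B : Matrix (Fin m) (Fin n) ℝ) (t : ℝ) :
    frobInner (A + t • B) (A + t • B)
      = frobInner A A + 2 * t * frobInner A B + t ^ 2 * frobInner B B := by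
  simp only [frobInner, Matrix.add_apply, Matrix.smul_apply, smul_eq_mul, Finset.mul_sum,
    ← Finset.sum_add_distrib]
  exact Finset.sum_congr rfl fun _ _ => Finset.sum_congr rfl fun _ _ => by ring

lemma frobNorm_smul (t : ℝ) (A : Matrix (Fin m) (Fin n) ℝ) :
    frobNorm (t • A) = |t| * frobNorm A := by
  have h : frobInner (t • A) (t • A) = t ^ 2 * frobInner A A := by
    simpa [frobInner] using frobInner_add_smul_self 0 A t
  rw [frobNorm, h, Real.sqrt_mul (sq_nonneg t), Real.sqrt_sq_eq_abs, frobNorm]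

lemma continuous_frobNorm : Continuous (frobNorm : Matrix (Fin m) (Fin n) ℝ → ℝ) := by
  unfold frobNorm frobInner
  fun_prop

lemma frobInner_mul_self_of_isStarProjection {P : Matrix (Fin m) (Fin m) ℝ}
    (hP : IsStarProjection P) (M : Matrix (Fin m) (Fin n) ℝ) :
    frobInner (P * M) (P * M) = (Mᵀ * P * M).trace := by
  rw [frobInner_eq_trace, transpose_mul, transpose_eq_self_of_isStarProjection hP,
    Matrix.mul_assoc, ← Matrix.mul_assoc P, hP.isIdempotentElem.eq, Matrix.mul_assoc]

lemma frobInner_mul_le_of_isStarProjection {P : Matrix (Fin m) (Fin m) ℝ}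
    (hP : IsStarProjection P) (M : Matrix (Fin m) (Fin n) ℝ) :
    frobInner (P * M) (P * M) ≤ frobInner M M := by
  have hsplit : frobInner M M
      = frobInner (P * M) (P * M) + frobInner ((1 - P) * M) ((1 - P) * M) := by
    rw [frobInner_mul_self_of_isStarProjection hP,
      frobInner_mul_self_of_isStarProjection hP.one_sub,
      ← trace_add, ← Matrix.add_mul, ← Matrix.mul_add, add_sub_cancel, Matrix.mul_one,
      frobInner_eq_trace]
  linarith [frobInner_self_nonneg ((1 - P) * M)]

lemma frobInner_mul_mul_le_of_isStarProjection {P : Matrix (Fin m) (Fin m) ℝ}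
    {Q : Matrix (Fin n) (Fin n) ℝ} (hP : IsStarProjection P) (hQ : IsStarProjection Q)
    (M : Matrix (Fin m) (Fin n) ℝ) :
    frobInner (P * M * Q) (P * M * Q) ≤ frobInner M M := by
  have hright : frobInner (M * Q) (M * Q) ≤ frobInner M M := by
    rw [← frobInner_transpose, ← frobInner_transpose M, transpose_mul,
      transpose_eq_self_of_isStarProjection hQ]
    exact frobInner_mul_le_of_isStarProjection hQ Mᵀ
  rw [Matrix.mul_assoc]
  exact (frobInner_mul_le_of_isStarProjection hP _).trans hright

lemma frobInner_le_add_of_forall_le_smul {F G : Matrix (Fin m) (Fin n) ℝ}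
    (h : ∀ t : ℝ, 0 < t → frobNorm (F - G) ≤ frobNorm (F - t • G)) :
    frobInner F F ≤ frobInner (F - G) (F - G) + frobInner G G := by
  set c := frobInner (F - G) G
  set b := frobInner G G
  have hF : frobInner F F = frobInner (F - G) (F - G) + 2 * c + b := by
    simpa using frobInner_add_smul_self (F - G) G 1
  suffices hc : c ≤ 0 by linarith
  by_contra! hc
  have hb : 0 ≤ b := frobInner_self_nonneg G
  -- stretching `G` by `1 + u` with `u = c / (b + c)` would strictly decrease the distance
  set u := c / (b + c)
  have hu : 0 < u := by positivity
  have hu' : u * (b + c) = c := div_mul_cancel₀ _ (by positivity)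
  have hstretch := frobNorm_le_frobNorm_iff.mp (h (1 + u) (by positivity))
  rw [show F - (1 + u) • G = (F - G) + (-u) • G by module, frobInner_add_smul_self] at hstretch
  nlinarith [mul_pos hu hc, mul_pos (mul_pos hu hu) hc]

end Frobenius

lemma exists_eq_mul_add_mul_add_normal {m n : ℕ} (X F : Matrix (Fin m) (Fin n) ℝ) :
    ∃ (C : Matrix (Fin m) (Fin m) ℝ) (D : Matrix (Fin n) (Fin n) ℝ) (A : Matrix (Fin m) (Fin n) ℝ),
      F = C * X + X * D + A ∧ A.rank ≤ min (m - X.rank) (n - X.rank) ∧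
        frobInner A A ≤ frobInner F F := by
  obtain ⟨P, hP, hPX, T, hPT⟩ := X.exists_isStarProjection_mul_eq_self
  obtain ⟨Q, hQ, hQX, S, hQS⟩ := Xᵀ.exists_isStarProjection_mul_eq_self
  have hQS' : Q = Sᵀ * X := by
    rw [← transpose_eq_self_of_isStarProjection hQ, hQS, transpose_mul, transpose_transpose]
  refine ⟨F * Sᵀ, T * F * (1 - Q), (1 - P) * F * (1 - Q), ?_, ?_,
    frobInner_mul_mul_le_of_isStarProjection hP.one_sub hQ.one_sub F⟩
  · rw [Matrix.mul_assoc F, ← hQS', ← Matrix.mul_assoc X, ← Matrix.mul_assoc X, ← hPT]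
    simp only [Matrix.sub_mul, Matrix.mul_sub, Matrix.one_mul, Matrix.mul_one]
    abel
  · have hP_rank := rank_add_rank_le_card_of_mul_eq_zero
      (show (1 - P) * X = 0 by rw [Matrix.sub_mul, hPX, Matrix.one_mul, sub_self])
    have hQ_rank := rank_add_rank_le_card_of_mul_eq_zero
      (show (1 - Q) * Xᵀ = 0 by rw [Matrix.sub_mul, hQX, Matrix.one_mul, sub_self])
    have hAP := ((1 - P) * F).rank_mul_le_left (1 - Q)
    have hPF := (1 - P).rank_mul_le_left F
    have hAQ := ((1 - P) * F).rank_mul_le_right (1 - Q)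
    simp only [Fintype.card_fin, rank_transpose] at hP_rank hQ_rank
    omega

section TangentCone

variable {m n : ℕ}

lemma smul_mem_matTangentCone {M : Set (Matrix (Fin m) (Fin n) ℝ)} {X Ξ : Matrix (Fin m) (Fin n) ℝ}
    {t : ℝ} (ht : 0 < t) (h : Ξ ∈ matTangentCone M X) : t • Ξ ∈ matTangentCone M X := by
  obtain ⟨Y, a, hY, ha, hYX, hlim⟩ := h
  refine ⟨Y, fun i => t * a i, hY, fun i => mul_pos ht (ha i), hYX, ?_⟩
  have hscale : ∀ i, frobNorm ((t * a i) • (Y i - X) - t • Ξ)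
      = t * frobNorm (a i • (Y i - X) - Ξ) := fun i => by
    rw [mul_smul, ← smul_sub, frobNorm_smul, abs_of_pos ht]
  simpa [hscale] using hlim.const_mul t

lemma mem_matTangentCone_of_add_smul_add_sq_smul_mem {M : Set (Matrix (Fin m) (Fin n) ℝ)}
    {X Ξ : Matrix (Fin m) (Fin n) ℝ} (W : Matrix (Fin m) (Fin n) ℝ)
    (h : ∀ t : ℝ, 0 < t → X + t • Ξ + t ^ 2 • W ∈ M) : Ξ ∈ matTangentCone M X := by
  set τ : ℕ → ℝ := fun i => 1 / ((i : ℝ) + 1)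
  have hτ : Filter.Tendsto τ Filter.atTop (nhds 0) := tendsto_one_div_add_atTop_nhds_zero_nat
  have hlim : ∀ f : ℝ → Matrix (Fin m) (Fin n) ℝ, Continuous f → f 0 = 0 →
      Filter.Tendsto (fun i => frobNorm (f (τ i))) Filter.atTop (nhds 0) := fun f hf hf0 => by
    have h0 : frobNorm (f 0) = 0 := by simp [hf0, frobNorm, frobInner]
    have := ((continuous_frobNorm.comp hf).tendsto 0).comp hτ
    rwa [Function.comp_apply, h0] at this
  have hdiff : ∀ i, X + τ i • Ξ + τ i ^ 2 • W - X = τ i • Ξ + τ i ^ 2 • W := fun i => by abel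
  refine ⟨fun i => X + τ i • Ξ + τ i ^ 2 • W, fun i => (i : ℝ) + 1, fun i => h _ (by positivity),
    fun i => by positivity, ?_, ?_⟩
  · simp only [hdiff]
    exact hlim (fun t => t • Ξ + t ^ 2 • W) (by fun_prop) (by simp)
  · have hrescale : ∀ i : ℕ, ((i : ℝ) + 1) • (X + τ i • Ξ + τ i ^ 2 • W - X) - Ξ = τ i • W :=
      fun i => by
        have h1 : ((i : ℝ) + 1) * τ i = 1 := by simp only [τ]; field_simp
        have h2 : ((i : ℝ) + 1) * τ i ^ 2 = τ i := by simp only [τ]; field_simp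
        rw [hdiff, smul_add, smul_smul, smul_smul, h1, h2, one_smul, add_sub_cancel_left]
    simp only [hrescale]
    exact hlim (fun t => t • W) (by fun_prop) (by simp)

lemma mul_add_mul_add_mem_matTangentCone {k : ℕ} (X : Matrix (Fin m) (Fin n) ℝ)
    (C : Matrix (Fin m) (Fin m) ℝ) (D : Matrix (Fin n) (Fin n) ℝ) (B : Matrix (Fin m) (Fin n) ℝ)
    (hB : X.rank + B.rank ≤ k) :
    C * X + X * D + B ∈ matTangentCone {Y : Matrix (Fin m) (Fin n) ℝ | Y.rank ≤ k} X := by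
  refine mem_matTangentCone_of_add_smul_add_sq_smul_mem (C * X * D) fun t _ => ?_
  have hfactor : X + t • (C * X + X * D + B) + t ^ 2 • (C * X * D)
      = (1 + t • C) * X * (1 + t • D) + t • B := by
    simp only [Matrix.add_mul, Matrix.mul_add, Matrix.one_mul, Matrix.mul_one, Matrix.smul_mul,
      Matrix.mul_smul, smul_add, smul_smul, pow_two]
    abel
  have hXpart := ((1 + t • C) * X).rank_mul_le_left (1 + t • D)
  have hXpart' := (1 + t • C).rank_mul_le_right X
  have hBpart := B.rank_mul_le_left (t • 1 : Matrix (Fin n) (Fin n) ℝ)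
  rw [Matrix.mul_smul, Matrix.mul_one] at hBpart
  show (X + t • (C * X + X * D + B) + t ^ 2 • (C * X * D)).rank ≤ k
  rw [hfactor]
  have := Matrix.rank_add_le ((1 + t • C) * X * (1 + t • D)) (t • B)
  omega

end TangentCone

section Deflation

variable {m n : ℕ}

lemma frobInner_self_pos {A : Matrix (Fin m) (Fin n) ℝ} (hA : A ≠ 0) : 0 < frobInner A A := by
  obtain ⟨i, j, hij⟩ : ∃ i j, A i j ≠ 0 := by
    by_contra! h
    exact hA (Matrix.ext h)
  exact Finset.sum_pos' (fun _ _ => Finset.sum_nonneg fun _ _ => mul_self_nonneg _)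
    ⟨i, Finset.mem_univ _, Finset.sum_pos' (fun _ _ => mul_self_nonneg _)
      ⟨j, Finset.mem_univ _, mul_self_pos.mpr hij⟩⟩

lemma frobInner_vecMulVec_right (A : Matrix (Fin m) (Fin n) ℝ) (w : Fin m → ℝ) (v : Fin n → ℝ) :
    frobInner A (vecMulVec w v) = w ⬝ᵥ (A *ᵥ v) := by
  simp only [frobInner, vecMulVec_apply, dotProduct, mulVec, Finset.mul_sum]
  exact Finset.sum_congr rfl fun _ _ => Finset.sum_congr rfl fun _ _ => by ring

lemma frobInner_sub_mul_vecMulVec_self (A : Matrix (Fin m) (Fin n) ℝ) {v : Fin n → ℝ}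
    (hv : v ⬝ᵥ v = 1) :
    frobInner (A - A * vecMulVec v v) (A - A * vecMulVec v v)
      = frobInner A A - (A *ᵥ v) ⬝ᵥ (A *ᵥ v) := by
  have hself : frobInner (vecMulVec (A *ᵥ v) v) (vecMulVec (A *ᵥ v) v) = (A *ᵥ v) ⬝ᵥ (A *ᵥ v) := by
    rw [frobInner_vecMulVec_right, ← mul_vecMulVec, ← mulVec_mulVec, vecMulVec_mulVec, hv]
    simp
  rw [mul_vecMulVec, sub_eq_add_neg, ← neg_one_smul ℝ (vecMulVec _ _), frobInner_add_smul_self,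
    frobInner_vecMulVec_right, hself]
  ring

lemma dotProduct_mulVec_self_of_eigen {A : Matrix (Fin m) (Fin n) ℝ} {v : Fin n → ℝ} {μ : ℝ}
    (hv : v ⬝ᵥ v = 1) (hμ : (Aᵀ * A) *ᵥ v = μ • v) : (A *ᵥ v) ⬝ᵥ (A *ᵥ v) = μ := by
  rw [dotProduct_mulVec, ← mulVec_transpose, mulVec_mulVec, hμ, smul_dotProduct, hv, smul_eq_mul,
    mul_one]

lemma rank_sub_mul_vecMulVec_lt {A : Matrix (Fin m) (Fin n) ℝ} {v : Fin n → ℝ} {μ : ℝ}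
    (hv : v ⬝ᵥ v = 1) (hμ0 : μ ≠ 0) (hμ : (Aᵀ * A) *ᵥ v = μ • v) :
    (A - A * vecMulVec v v).rank < A.rank := by
  have hle : LinearMap.range (A - A * vecMulVec v v).mulVecLin ≤ LinearMap.range A.mulVecLin := by
    rw [show A - A * vecMulVec v v = A * (1 - vecMulVec v v) by rw [Matrix.mul_sub, Matrix.mul_one],
      mulVecLin_mul]
    exact LinearMap.range_comp_le_range _ _
  refine Submodule.finrank_lt_finrank_of_lt (SetLike.lt_iff_le_and_exists.mpr
    ⟨hle, A *ᵥ v, LinearMap.mem_range_self _ v, ?_⟩)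
  rintro ⟨y, hy⟩
  have horth : (A *ᵥ v) ⬝ᵥ ((A - A * vecMulVec v v) *ᵥ y) = 0 := by
    have hrow : (A *ᵥ v) ᵥ* A = μ • v := by rw [← mulVec_transpose, mulVec_mulVec, hμ]
    rw [sub_mulVec, ← mulVec_mulVec, vecMulVec_mulVec, dotProduct_sub, dotProduct_mulVec,
      dotProduct_mulVec, hrow]
    simp [hv, mul_comm]
  rw [mulVecLin_apply] at hy
  rw [hy, dotProduct_mulVec_self_of_eigen hv hμ] at horth
  exact hμ0 horth

lemma exists_eigenvector_frobInner_le_rank_mul {A : Matrix (Fin m) (Fin n) ℝ} (hA : A ≠ 0) :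
    ∃ (v : Fin n → ℝ) (μ : ℝ), v ⬝ᵥ v = 1 ∧ (Aᵀ * A) *ᵥ v = μ • v ∧
      frobInner A A ≤ A.rank * μ := by
  have hM : (Aᵀ * A).IsHermitian := by
    simpa [conjTranspose_eq_transpose_of_trivial] using (posSemidef_conjTranspose_mul_self A).1
  have : Nonempty (Fin n) := by
    by_contra! h
    exact hA (Matrix.ext fun _ j => (h.false j).elim)
  obtain ⟨i₀, hi₀⟩ := Finite.exists_max hM.eigenvalues
  refine ⟨hM.eigenvectorBasis i₀, hM.eigenvalues i₀, ?_, hM.mulVec_eigenvectorBasis i₀, ?_⟩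
  · have h : inner ℝ (hM.eigenvectorBasis i₀) (hM.eigenvectorBasis i₀) = 1 := by
      rw [real_inner_self_eq_norm_sq, hM.eigenvectorBasis.orthonormal.1 i₀, one_pow]
    rwa [EuclideanSpace.inner_eq_star_dotProduct, star_trivial] at h
  · have htrace : frobInner A A = ∑ i, hM.eigenvalues i := by
      simpa [frobInner_eq_trace] using hM.trace_eq_sum_eigenvalues
    have hrank : A.rank = (Finset.univ.filter fun i => hM.eigenvalues i ≠ 0).card := by
      rw [← rank_transpose_mul_self, hM.rank_eq_card_non_zero_eigs, Fintype.card_subtype]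
    rw [htrace, hrank, ← Finset.sum_filter_ne_zero, ← nsmul_eq_mul]
    exact Finset.sum_le_card_nsmul _ _ _ fun i _ => hi₀ i

lemma exists_rank_le_one_deflation {A : Matrix (Fin m) (Fin n) ℝ} (hA : A ≠ 0) {p : ℕ}
    (hp : A.rank ≤ p) :
    ∃ R : Matrix (Fin m) (Fin n) ℝ, R.rank ≤ 1 ∧ (A - R).rank < A.rank ∧
      (p : ℝ) * frobInner (A - R) (A - R) ≤ (p - 1) * frobInner A A := by
  obtain ⟨v, μ, hv, hμ, hbound⟩ := exists_eigenvector_frobInner_le_rank_mul hA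
  have hpos := frobInner_self_pos hA
  have hrank : (A.rank : ℝ) ≤ p := by exact_mod_cast hp
  have hμ0 : 0 < μ := by
    by_contra! h
    nlinarith [mul_nonpos_of_nonneg_of_nonpos (Nat.cast_nonneg A.rank) h]
  refine ⟨A * vecMulVec v v, ?_, rank_sub_mul_vecMulVec_lt hv hμ0.ne' hμ, ?_⟩
  · rw [mul_vecMulVec]
    exact rank_vecMulVec_le _ _
  · rw [frobInner_sub_mul_vecMulVec_self A hv, dotProduct_mulVec_self_of_eigen hv hμ]
    nlinarith

theorem exists_rank_le_mul_frobInner_sub_le (j : ℕ) :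
    ∀ {p : ℕ} (A : Matrix (Fin m) (Fin n) ℝ), A.rank ≤ p → j ≤ p →
      ∃ B : Matrix (Fin m) (Fin n) ℝ, B.rank ≤ j ∧
        (p : ℝ) * frobInner (A - B) (A - B) ≤ (p - j) * frobInner A A := by
  induction j with
  | zero => exact fun A _ _ => ⟨0, (rank_zero).le, by simp⟩
  | succ j ih =>
    intro p A hAp hjp
    by_cases hA : A.rank ≤ j + 1
    · refine ⟨A, hA, ?_⟩
      have hjp' : ((j + 1 : ℕ) : ℝ) ≤ p := by exact_mod_cast hjp
      simpa [frobInner] using mul_nonneg (sub_nonneg.mpr hjp') (frobInner_self_nonneg A)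
    · have hA0 : A ≠ 0 := by rintro rfl; simp [rank_zero] at hA
      obtain ⟨R, hR, hAR, hdefl⟩ := exists_rank_le_one_deflation hA0 hAp
      obtain ⟨q, rfl⟩ : ∃ q, p = q + 1 := ⟨p - 1, by omega⟩
      obtain ⟨B, hB, hAB⟩ := ih (A - R) (p := q) (by omega) (by omega)
      refine ⟨R + B, (rank_add_le R B).trans (by omega), ?_⟩
      rw [show A - (R + B) = A - R - B by abel]
      have hq : (1 : ℝ) ≤ q := by exact_mod_cast (by omega : 1 ≤ q)
      have hjq : (j : ℝ) ≤ q := by exact_mod_cast (by omega : j ≤ q)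
      push_cast at hdefl ⊢
      nlinarith [frobInner_self_nonneg (A - R - B), frobInner_self_nonneg (A - R),
        mul_le_mul_of_nonneg_left hdefl (sub_nonneg.mpr hjq)]

end Deflation

/-- If `rank X = s < k ≤ min(m,n)` and `G` is a best Frobenius-norm
approximation of `F` in the tangent cone `T_X M_{≤k}`, then
`‖G‖_F ≥ sqrt((k−s)/min(m−s,n−s)) ‖F‖_F`. -/
theorem stmt_6 {m n s k : ℕ} (X : Matrix (Fin m) (Fin n) ℝ)
    (hrank : X.rank = s) (hsk : s < k) (hkm : k ≤ m) (hkn : k ≤ n)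
    (F G : Matrix (Fin m) (Fin n) ℝ)
    (hG : G ∈ matTangentCone {Y : Matrix (Fin m) (Fin n) ℝ | Y.rank ≤ k} X)
    (hbest : ∀ H ∈ matTangentCone {Y : Matrix (Fin m) (Fin n) ℝ | Y.rank ≤ k} X,
      frobNorm (F - G) ≤ frobNorm (F - H)) :
    Real.sqrt (((k : ℝ) - s) / min ((m : ℝ) - s) ((n : ℝ) - s)) * frobNorm F
      ≤ frobNorm G := by
  obtain ⟨C, D, A, hF, hA_rank, hA_norm⟩ := exists_eq_mul_add_mul_add_normal X F
  rw [hrank] at hA_rank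
  set p := min (m - s) (n - s)
  obtain ⟨B, hB_rank, hB⟩ := exists_rank_le_mul_frobInner_sub_le (k - s) A hA_rank
    (by omega : k - s ≤ p)
  have hH := mul_add_mul_add_mem_matTangentCone X C D B (by omega : X.rank + B.rank ≤ k)
  have hFG : frobInner (F - G) (F - G) ≤ frobInner (A - B) (A - B) := by
    have := frobNorm_le_frobNorm_iff.mp (hbest _ hH)
    rwa [show F - (C * X + X * D + B) = A - B by rw [hF]; abel] at this
  have hpyth :=
    frobInner_le_add_of_forall_le_smul fun t ht => hbest _ (smul_mem_matTangentCone ht hG)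
  have hp : (0 : ℝ) < p := by exact_mod_cast (by omega : 0 < p)
  have hratio : ((k : ℝ) - s) / min ((m : ℝ) - s) ((n : ℝ) - s) = ((k - s : ℕ) : ℝ) / p := by
    simp only [p, Nat.cast_min, Nat.cast_sub hsk.le, Nat.cast_sub (hsk.trans_le hkm).le,
      Nat.cast_sub (hsk.trans_le hkn).le]
  have hks : ((k - s : ℕ) : ℝ) ≤ p := by exact_mod_cast (by omega : k - s ≤ p)
  rw [hratio, frobNorm, frobNorm, ← Real.sqrt_mul (by positivity)]
  refine Real.sqrt_le_sqrt ?_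
  rw [div_mul_eq_mul_div, div_le_iff₀ hp]
  nlinarith [mul_le_mul_of_nonneg_left hA_norm (sub_nonneg.mpr hks), frobInner_self_nonneg F]
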